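/- arXiv:2511.20981 — 2 statements merged into one kernel-verified Lean document; each statement's English description precedes it below -/
import Mathlib

section
/- Let σ_abs, σ_ems, N, ħω_s, ħω_p, τ > 0 and I_p, I_s ≥ 0. Define ψ_ℓ^c = σ_ℓ^c I_ℓ/(ħω_ℓ) and g(I_p, I_s) = N(σ_ems + σ_abs) (ψ_p^abs + ψ_s^abs)/(ψ_p^abs + ψ_p^ems + ψ_s^abs + ψ_s^ems + 1/τ) − σ_abs N. Then |I_s · ∂g/∂I_s| ≤ N (σ_ems + σ_abs) for all I_s ≥ 0. -/
/-- Bound on `|I_s ∂g/∂I_s|` for the ytterbium steady-state gain: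
`g(I_s) = N(σ_ems+σ_abs)·(ψ_p^abs+ψ_s^abs)/(ψ_p^abs+ψ_p^ems+ψ_s^abs+ψ_s^ems+1/τ) − σ_abs N`
with rates `ψ_ℓ^c = σ_ℓ^c I_ℓ/(ħω_ℓ)`. -/
theorem yb_gain_first_derivative_bound
    (σabs σems σpa σpe σsa σse N ωs ωp τ Ip : ℝ)
    (hσabs : 0 < σabs) (hσems : 0 < σems)
    (hσpa : 0 < σpa) (hσpe : 0 < σpe) (hσsa : 0 < σsa) (hσse : 0 < σse)
    (hN : 0 < N) (hωs : 0 < ωs) (hωp : 0 < ωp) (hτ : 0 < τ) (hIp : 0 ≤ Ip)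
    (g : ℝ → ℝ)
    (hg : ∀ Is : ℝ, g Is =
      N * (σems + σabs) *
        ((σpa * Ip / ωp + σsa * Is / ωs) /
          (σpa * Ip / ωp + σpe * Ip / ωp + σsa * Is / ωs + σse * Is / ωs + 1 / τ))
      - σabs * N) :
    ∀ Is : ℝ, 0 ≤ Is → |Is * deriv g Is| ≤ N * (σems + σabs) := by
  intro Is hIs
  set C := N * (σems + σabs) with hC
  have hCpos : 0 < C := by positivity
  set a := σpa * Ip / ωp with ha
  set p := σsa / ωs with hp
  set b := σpa * Ip / ωp + σpe * Ip / ωp + 1 / τ with hb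
  set q := σsa / ωs + σse / ωs with hq
  have ha0 : 0 ≤ a := by positivity
  have hb0 : 0 < b := by positivity
  have hp0 : 0 < p := by positivity
  have hq0 : 0 < q := by positivity
  have hab : a ≤ b := by
    rw [ha, hb]
    have : 0 ≤ σpe * Ip / ωp := by positivity
    have : 0 < 1 / τ := by positivity
    linarith
  have hpq : p ≤ q := by
    rw [hp, hq]
    have : 0 ≤ σse / ωs := by positivity
    linarith
  have hgf : g = fun x => C * ((a + p * x) / (b + q * x)) - σabs * N := by
    funext x
    rw [hg x, hC, ha, hp, hb, hq]
    ring_nf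
  have hden : b + q * Is ≠ 0 := by
    have : 0 ≤ q * Is := by positivity
    linarith
  have h1 : HasDerivAt (fun x : ℝ => a + p * x) p Is := by
    simpa using ((hasDerivAt_id Is).const_mul p).const_add a
  have h2 : HasDerivAt (fun x : ℝ => b + q * x) q Is := by
    simpa using ((hasDerivAt_id Is).const_mul q).const_add b
  have h3 := ((h1.div h2 hden).const_mul C).sub_const (σabs * N)
  have hderiv : deriv g Is =
      C * ((p * (b + q * Is) - (a + p * Is) * q) / (b + q * Is) ^ 2) := by
    rw [hgf]
    exact h3.deriv
  rw [hderiv]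
  have hkey : p * (b + q * Is) - (a + p * Is) * q = p * b - a * q := by ring
  rw [hkey]
  have hs : 0 < (b + q * Is) ^ 2 := by positivity
  have habs : |p * b - a * q| ≤ q * b := by
    have e1 : a * q ≤ b * q := mul_le_mul_of_nonneg_right hab hq0.le
    have e2 : p * b ≤ q * b := mul_le_mul_of_nonneg_right hpq hb0.le
    have e3 : 0 ≤ p * b := by positivity
    have e4 : 0 ≤ a * q := by positivity
    rw [abs_le]
    constructor
    · linarith
    · linarith
  have hnum : |Is * (C * ((p * b - a * q) / (b + q * Is) ^ 2))| =
      C * Is * |p * b - a * q| / (b + q * Is) ^ 2 := by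
    rw [abs_mul, abs_mul, abs_div, abs_of_nonneg hIs, abs_of_pos hCpos,
      abs_of_pos hs]
    ring
  rw [hnum, div_le_iff₀ hs]
  have h4 : Is * |p * b - a * q| ≤ (b + q * Is) ^ 2 := by
    have h5 : Is * |p * b - a * q| ≤ Is * (q * b) :=
      mul_le_mul_of_nonneg_left habs hIs
    have hexp : (b + q * Is) ^ 2 = (b - q * Is) ^ 2 + 4 * (Is * (q * b)) := by
      ring
    have h6 : 0 ≤ Is * (q * b) := by positivity
    have h7 : 0 ≤ (b - q * Is) ^ 2 := sq_nonneg _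
    linarith
  rw [mul_assoc]
  exact mul_le_mul_of_nonneg_left h4 hCpos.le
end

section
/- Let σ_abs, σ_ems, N, ħω_s, ħω_p, τ > 0 and I_p, I_s ≥ 0, with ψ_ℓ^c = σ_ℓ^c I_ℓ/(ħω_ℓ) and g as the ytterbium steady-state gain. Then |I_s² · ∂²g/∂I_s²| ≤ 2√2 N (σ_ems + σ_abs). -/
/-!
As a function of `x = I_s`, the gain is `C f(x) - σ_abs N` with `C = N (σ_ems + σ_abs)` and
the linear-fractional map `f(x) = (A + b x) / (P + c x)` with `0 ≤ A ≤ P`, `0 ≤ b ≤ c`, `P > 0`.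
Its second derivative is `f''(x) = 2 c (A c - b P) / (P + c x)³`, and `|A c - b P| ≤ c P`, so
`x² |f''(x)| ≤ 2 (c x)² P / (P + c x)³ ≤ 2`. Hence `|x² g''(x)| ≤ 2 C ≤ 2 √2 C`.
-/

open Filter Topology

section LinearFractional

variable {A b P c : ℝ}

theorem hasDerivAt_linearFractional {x : ℝ} (hx : P + c * x ≠ 0) :
    HasDerivAt (fun y => (A + b * y) / (P + c * y)) ((b * P - A * c) / (P + c * x) ^ 2) x := by
  have hnum : HasDerivAt (fun y => A + b * y) b x := by
    simpa using ((hasDerivAt_id x).const_mul b).const_add A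
  have hden : HasDerivAt (fun y => P + c * y) c x := by
    simpa using ((hasDerivAt_id x).const_mul c).const_add P
  exact (hnum.fun_div hden hx).congr_deriv (by ring)

theorem deriv_deriv_linearFractional {x : ℝ} (hx : P + c * x ≠ 0) :
    deriv (deriv fun y => (A + b * y) / (P + c * y)) x
      = 2 * c * (A * c - b * P) / (P + c * x) ^ 3 := by
  have hopen : IsOpen {y : ℝ | P + c * y ≠ 0} := isOpen_ne_fun (by fun_prop) continuous_const
  have hderiv : (deriv fun y => (A + b * y) / (P + c * y))
      =ᶠ[𝓝 x] fun y => (b * P - A * c) / (P + c * y) ^ 2 :=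
    eventually_of_mem (hopen.mem_nhds hx) fun y hy => (hasDerivAt_linearFractional hy).deriv
  have hden : HasDerivAt (fun y => (P + c * y) ^ 2) (2 * (P + c * x) * c) x := by
    simpa using (((hasDerivAt_id x).const_mul c).const_add P).fun_pow 2
  rw [hderiv.deriv_eq,
    ((hasDerivAt_const x (b * P - A * c)).fun_div hden (pow_ne_zero 2 hx)).deriv]
  field_simp
  ring

theorem abs_mul_sub_mul_le (hA : 0 ≤ A) (hAP : A ≤ P) (hb : 0 ≤ b) (hbc : b ≤ c) :
    |A * c - b * P| ≤ c * P := by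
  have hP : 0 ≤ P := hA.trans hAP
  rw [abs_le]
  constructor <;> nlinarith [mul_nonneg hA (hb.trans hbc), mul_nonneg hb hP]

theorem sq_mul_le_add_pow_three {t P : ℝ} (ht : 0 ≤ t) (hP : 0 ≤ P) :
    t ^ 2 * P ≤ (P + t) ^ 3 := by
  nlinarith [pow_nonneg hP 3, mul_nonneg (pow_nonneg hP 2) ht, mul_nonneg hP (pow_nonneg ht 2),
    pow_nonneg ht 3]

theorem abs_sq_mul_deriv_deriv_linearFractional_le_two (hA : 0 ≤ A) (hAP : A ≤ P) (hP : 0 < P)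
    (hb : 0 ≤ b) (hbc : b ≤ c) {x : ℝ} (hx : 0 ≤ x) :
    |x ^ 2 * deriv (deriv fun y => (A + b * y) / (P + c * y)) x| ≤ 2 := by
  have hc : 0 ≤ c := hb.trans hbc
  have hcx : 0 ≤ c * x := mul_nonneg hc hx
  have hpos : 0 < P + c * x := by positivity
  have hfac : 0 ≤ 2 * c * x ^ 2 / (P + c * x) ^ 3 := by positivity
  calc |x ^ 2 * deriv (deriv fun y => (A + b * y) / (P + c * y)) x|
      = 2 * c * x ^ 2 / (P + c * x) ^ 3 * |A * c - b * P| := by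
        rw [deriv_deriv_linearFractional hpos.ne', ← abs_of_nonneg hfac, ← abs_mul]
        congr 1
        ring
    _ ≤ 2 * c * x ^ 2 / (P + c * x) ^ 3 * (c * P) :=
        mul_le_mul_of_nonneg_left (abs_mul_sub_mul_le hA hAP hb hbc) hfac
    _ = 2 * ((c * x) ^ 2 * P) / (P + c * x) ^ 3 := by ring
    _ ≤ 2 := by
        rw [div_le_iff₀ (by positivity)]
        linarith [sq_mul_le_add_pow_three hcx hP.le]

end LinearFractional

theorem deriv_deriv_const_mul_sub_const {𝕜 : Type*} [NontriviallyNormedField 𝕜] (C K : 𝕜)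
    (f : 𝕜 → 𝕜) :
    deriv (deriv fun x => C * f x - K) = fun x => C * deriv (deriv f) x := by
  have hderiv : (deriv fun x => C * f x - K) = fun x => C * deriv f x := by
    ext x
    rw [deriv_sub_const, deriv_const_mul_field']
  rw [hderiv, deriv_const_mul_field']

/-- Bound on `|I_s² ∂²g/∂I_s²|` for the ytterbium steady-state gain. -/
theorem yb_gain_second_derivative_bound
    (σabs σems σpa σpe σsa σse N ωs ωp τ Ip : ℝ)
    (hσabs : 0 < σabs) (hσems : 0 < σems)
    (hσpa : 0 < σpa) (hσpe : 0 < σpe) (hσsa : 0 < σsa) (hσse : 0 < σse)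
    (hN : 0 < N) (hωs : 0 < ωs) (hωp : 0 < ωp) (hτ : 0 < τ) (hIp : 0 ≤ Ip)
    (g : ℝ → ℝ)
    (hg : ∀ Is : ℝ, g Is =
      N * (σems + σabs) *
        ((σpa * Ip / ωp + σsa * Is / ωs) /
          (σpa * Ip / ωp + σpe * Ip / ωp + σsa * Is / ωs + σse * Is / ωs + 1 / τ))
      - σabs * N) :
    ∀ Is : ℝ, 0 ≤ Is →
      |Is ^ 2 * deriv (deriv g) Is| ≤ 2 * Real.sqrt 2 * N * (σems + σabs) := by
  intro Is hIs
  set A := σpa * Ip / ωp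
  set P := σpa * Ip / ωp + σpe * Ip / ωp + 1 / τ
  set b := σsa / ωs
  set c := σsa / ωs + σse / ωs
  have hgf : g = fun x => N * (σems + σabs) * ((A + b * x) / (P + c * x)) - σabs * N := by
    ext x
    rw [hg]
    ring
  have hAP : A ≤ P := by
    simp only [A, P]
    linarith [show 0 ≤ σpe * Ip / ωp + 1 / τ by positivity]
  have hbc : b ≤ c := by
    simp only [b, c]
    linarith [div_pos hσse hωs]
  have hf := abs_sq_mul_deriv_deriv_linearFractional_le_two (by positivity) hAP (by positivity)
    (by positivity) hbc hIs
  have hC : 0 < N * (σems + σabs) := by positivity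
  calc |Is ^ 2 * deriv (deriv g) Is|
      = N * (σems + σabs) * |Is ^ 2 * deriv (deriv fun y => (A + b * y) / (P + c * y)) Is| := by
        rw [hgf, deriv_deriv_const_mul_sub_const, mul_left_comm, abs_mul, abs_of_pos hC]
    _ ≤ N * (σems + σabs) * 2 := by gcongr
    _ ≤ 2 * Real.sqrt 2 * N * (σems + σabs) := by nlinarith [Real.one_lt_sqrt_two]
end
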